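/- arXiv:1809.09748 — 7 statements merged into one kernel-verified Lean document; each statement's English description precedes it below -/
import Mathlib

section
/- Let n be odd and suppose the stochastic map c : {0,1}ⁿ → {0,1} computes the majority function with advantage γ, i.e. P[c(x) = Maj_n(x)] ≥ 1/2 + γ for all x. Then A_c'(1/2) ≥ (nγ/2ⁿ) · C(n-1, (n-1)/2). -/
/-!
Differentiating term by term, `A'(1/2) = 2^(1-n) ∑ₓ (2|x| - n) q(x)`.
Since `∑ₓ (2|x| - n) = 0` (complementation swaps `|x|` and `n - |x|`), `q(x)` may be replaced
by `q(x) - 1/2`, and then the advantage hypothesis bounds every term below by `γ |2|x| - n|`.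
Finally, for every `i`, `∑ₓ |2|x| - n| ≥ ∑_{k > i} (2k - n) C(n,k) = n C(n-1,i)`, the sum
telescoping because `(2k - n) C(n,k) = n (C(n-1,k-1) - C(n-1,k))`.
-/

/-- Hamming weight of a boolean string. -/
def hw {n : ℕ} (x : Fin n → Bool) : ℕ := (Finset.univ.filter fun i => x i = true).card

/-- Amplification function of a stochastic map `c : {0,1}ⁿ → {0,1}` given by the
probabilities `q x = P[c(x) = 1]`. -/
noncomputable def ampF (n : ℕ) (q : (Fin n → Bool) → ℝ) (p : ℝ) : ℝ :=
  ∑ x : Fin n → Bool, p ^ hw x * (1 - p) ^ (n - hw x) * q x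

open Finset

def finsetEquivBoolFun (α : Type*) [Fintype α] [DecidableEq α] :
    Finset α ≃ (α → Bool) where
  toFun s i := decide (i ∈ s)
  invFun x := univ.filter fun i => x i
  left_inv s := by ext i; simp
  right_inv x := by funext i; simp

section Weight

variable {n : ℕ}

lemma hw_finsetEquivBoolFun (s : Finset (Fin n)) : hw (finsetEquivBoolFun (Fin n) s) = #s := by
  simp [hw, finsetEquivBoolFun]

lemma hw_le (x : Fin n → Bool) : hw x ≤ n :=
  (card_filter_le _ _).trans_eq (card_fin n)

lemma hw_not (x : Fin n → Bool) : hw (fun i => !x i) = n - hw x := by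
  have h := card_filter_add_card_filter_not (s := univ) fun i => x i = true
  simp only [card_univ, Fintype.card_fin, Bool.not_eq_true] at h
  simp only [hw, Bool.not_eq_true']
  omega

lemma sum_comp_hw {M : Type*} [AddCommMonoid M] (f : ℕ → M) :
    ∑ x : Fin n → Bool, f (hw x) = ∑ k ∈ range (n + 1), n.choose k • f k := by
  rw [← (finsetEquivBoolFun (Fin n)).sum_comp]
  simp only [hw_finsetEquivBoolFun]
  rw [← powerset_univ, sum_powerset_apply_card, card_univ, Fintype.card_fin]

lemma sum_two_mul_hw_sub : ∑ x : Fin n → Bool, (2 * hw x - n : ℝ) = 0 := by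
  have h : ∑ x : Fin n → Bool, (2 * hw x - n : ℝ) = ∑ x, -(2 * hw x - n : ℝ) :=
    Fintype.sum_bijective (fun x i => !x i) (Function.Involutive.bijective fun x => by simp) _ _
      fun x => by rw [hw_not, Nat.cast_sub (hw_le x)]; ring
  rw [sum_neg_distrib] at h
  linarith

lemma sum_two_mul_hw_sub_mul_sub_half (q : (Fin n → Bool) → ℝ) :
    ∑ x, (2 * hw x - n : ℝ) * (q x - 1 / 2) = ∑ x, (2 * hw x - n : ℝ) * q x := by
  simp_rw [mul_sub]
  rw [sum_sub_distrib, ← sum_mul, sum_two_mul_hw_sub, zero_mul, sub_zero]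

end Weight

section Binomial

variable {R : Type*} [CommRing R]

lemma two_mul_succ_sub_mul_choose_succ (N k : ℕ) :
    (2 * (k + 1) - (N + 1) : R) * (N + 1).choose (k + 1) =
      (N + 1) * (N.choose k - N.choose (k + 1)) := by
  have hmul : ((N + 1 : ℕ) : R) * N.choose k = (N + 1).choose (k + 1) * (k + 1 : ℕ) := by
    exact_mod_cast congrArg (Nat.cast : ℕ → R) (Nat.add_one_mul_choose_eq N k)
  have hpascal : ((N + 1).choose (k + 1) : R) = N.choose k + N.choose (k + 1) := by
    exact_mod_cast congrArg (Nat.cast : ℕ → R) (Nat.choose_succ_succ' N k)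
  push_cast at hmul
  linear_combination -2 * hmul - (N + 1 : R) * hpascal

lemma sum_Ioc_two_mul_sub_mul_choose (n i : ℕ) :
    ∑ k ∈ Ioc i n, (2 * k - n : R) * n.choose k = n * (n - 1).choose i := by
  induction h : n - i generalizing i with
  | zero =>
    rw [Ioc_eq_empty (by omega), sum_empty]
    rcases n with _ | N
    · simp
    · rw [Nat.choose_eq_zero_of_lt (by omega), Nat.cast_zero, mul_zero]
  | succ d ih =>
    obtain ⟨N, rfl⟩ : ∃ N, n = N + 1 := ⟨n - 1, by omega⟩
    rw [← insert_Ioc_succ_left_eq_Ioc (by omega), Order.succ_eq_add_one, sum_insert (by simp),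
      ih (i + 1) (by omega)]
    push_cast
    rw [two_mul_succ_sub_mul_choose_succ]
    ring

end Binomial

lemma natCast_mul_choose_le_sum_abs_two_mul_hw_sub (n i : ℕ) :
    n * (n - 1).choose i ≤ ∑ x : Fin n → Bool, |(2 * hw x - n : ℝ)| := by
  rw [sum_comp_hw (fun k => |(2 * k - n : ℝ)|), ← sum_Ioc_two_mul_sub_mul_choose]
  calc ∑ k ∈ Ioc i n, (2 * k - n : ℝ) * n.choose k
      ≤ ∑ k ∈ Ioc i n, n.choose k • |(2 * k - n : ℝ)| :=
        sum_le_sum fun k _ => by rw [nsmul_eq_mul, mul_comm]; gcongr; exact le_abs_self _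
    _ ≤ ∑ k ∈ range (n + 1), n.choose k • |(2 * k - n : ℝ)| :=
        sum_le_sum_of_subset_of_nonneg
          (fun k hk => mem_range.2 (Nat.lt_succ_of_le (mem_Ioc.1 hk).2)) fun k _ _ => by positivity

lemma natCast_mul_pow_sub_one_mul_pow {R : Type*} [Semiring R] (x : R) (a b : ℕ) :
    a * x ^ (a - 1) * x ^ b = a * x ^ (a + b - 1) := by
  rcases a with _ | a
  · simp
  · rw [mul_assoc, ← pow_add]; congr 3; omega

lemma hasDerivAt_pow_mul_one_sub_pow_half {k n : ℕ} (hk : k ≤ n) :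
    HasDerivAt (fun p : ℝ => p ^ k * (1 - p) ^ (n - k))
      ((2 * k - n) * (1 / 2) ^ (n - 1)) (1 / 2) := by
  refine ((hasDerivAt_pow k (1 / 2 : ℝ)).mul
    ((hasDerivAt_pow (n - k) (1 - 1 / 2 : ℝ)).comp _
      ((hasDerivAt_id (1 / 2 : ℝ)).const_sub 1))).congr_deriv ?_
  have hk' := natCast_mul_pow_sub_one_mul_pow (1 / 2 : ℝ) k (n - k)
  have hnk := natCast_mul_pow_sub_one_mul_pow (1 / 2 : ℝ) (n - k) k
  rw [Nat.add_sub_cancel' hk] at hk'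
  rw [Nat.sub_add_cancel hk] at hnk
  norm_num [Nat.cast_sub hk] at hk' hnk ⊢
  linear_combination hk' - hnk

lemma hasDerivAt_ampF_half (n : ℕ) (q : (Fin n → Bool) → ℝ) :
    HasDerivAt (ampF n q) ((1 / 2) ^ (n - 1) * ∑ x, (2 * hw x - n) * q x) (1 / 2) := by
  rw [mul_sum]
  exact (HasDerivAt.fun_sum fun x _ =>
    (hasDerivAt_pow_mul_one_sub_pow_half (hw_le x)).mul_const (q x)).congr_deriv
      (sum_congr rfl fun x _ => by ring)

lemma mul_abs_two_mul_sub_le {k n q γ : ℝ} (h : 1 / 2 + γ ≤ if n / 2 < k then q else 1 - q) :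
    γ * |2 * k - n| ≤ (2 * k - n) * (q - 1 / 2) := by
  split_ifs at h with hk
  · rw [abs_of_pos (by linarith)]; nlinarith
  · rw [abs_of_nonpos (by linarith)]; nlinarith

theorem stmt3_general (n : ℕ) (γ : ℝ) (hγ : 0 < γ)
    (q : (Fin n → Bool) → ℝ)
    (hmaj : ∀ x : Fin n → Bool,
      (if (n : ℝ) / 2 < (hw x : ℝ) then q x else 1 - q x) ≥ 1/2 + γ) :
    (n : ℝ) * γ / 2 ^ n * (Nat.choose (n-1) ((n-1)/2)) ≤ deriv (ampF n q) (1/2) := by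
  rw [(hasDerivAt_ampF_half n q).deriv]
  have hsum : γ * (n * (n - 1).choose ((n - 1) / 2)) ≤ ∑ x, (2 * hw x - n : ℝ) * q x :=
    calc γ * (n * (n - 1).choose ((n - 1) / 2))
        ≤ γ * ∑ x : Fin n → Bool, |(2 * hw x - n : ℝ)| :=
          mul_le_mul_of_nonneg_left (natCast_mul_choose_le_sum_abs_two_mul_hw_sub _ _) hγ.le
      _ ≤ ∑ x, (2 * hw x - n : ℝ) * (q x - 1 / 2) := by
          rw [mul_sum]; exact sum_le_sum fun x _ => mul_abs_two_mul_sub_le (hmaj x)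
      _ = _ := sum_two_mul_hw_sub_mul_sub_half q
  have hhalf : 1 / 2 ^ n ≤ (1 / 2 : ℝ) ^ (n - 1) := by
    rw [← one_div_pow]; exact pow_le_pow_of_le_one (by norm_num) (by norm_num) (Nat.sub_le n 1)
  calc (n : ℝ) * γ / 2 ^ n * (n - 1).choose ((n - 1) / 2)
      = 1 / 2 ^ n * (γ * (n * (n - 1).choose ((n - 1) / 2))) := by ring
    _ ≤ (1 / 2) ^ (n - 1) * (γ * (n * (n - 1).choose ((n - 1) / 2))) := by gcongr
    _ ≤ _ := by gcongr

theorem stmt3 (n : ℕ) (hn : Odd n) (γ : ℝ) (hγ : 0 < γ)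
    (q : (Fin n → Bool) → ℝ) (hq : ∀ x, q x ∈ Set.Icc (0:ℝ) 1)
    (hmaj : ∀ x : Fin n → Bool,
      (if (n : ℝ) / 2 < (hw x : ℝ) then q x else 1 - q x) ≥ 1/2 + γ) :
    (n : ℝ) * γ / 2 ^ n * (Nat.choose (n-1) ((n-1)/2)) ≤ deriv (ampF n q) (1/2) :=
  stmt3_general n γ hγ q hmaj
end

section
/- Fix θ ∈ (0,1), θ ≠ 1/2, and an integer d ≥ 0. Consider nonnegative reals n₀,...,n_d with Σ n_s = k and n_s ≤ 2^s for all s. Then Σ_{s=0}^{d} n_s θ^s ≤ ((2θ)^{log₂(k+1)} - 1)/(2θ - 1). -/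
/-!
Put `c = log₂ (2θ)` and `φ x = x ^ c / (2 ^ c - 1)`. Whatever the sign of `c < 1`, `φ` is
concave on `(0, ∞)`; moreover `φ (2x) = 2θ φ x` and `φ 2 - φ 1 = 1`, and the bound reads
`φ (k + 1) - φ 1`. Induct on the depth: the levels `1, …, d`, halved, are an instance of depth
one less, so after peeling off the mass `a ≤ 1` at level `0` it remains to see
`φ (x + 1 - a) - φ x ≤ 1 - a` for `x ≥ 1`, `x + 1 - a ≥ 2`, i.e. that a secant of `φ` to the
right of `[1, 2]` is no steeper than the secant over `[1, 2]`.
-/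

open Real Set Finset

theorem convexOn_rpow_of_nonpos {p : ℝ} (hp : p ≤ 0) :
    ConvexOn ℝ (Ioi 0) fun x : ℝ => x ^ p := by
  have hlog : log '' Ioi 0 = univ :=
    eq_univ_of_forall fun y => ⟨exp y, exp_pos y, log_exp y⟩
  have hexp : ConvexOn ℝ (log '' Ioi 0) fun y => exp (p * y) := by
    rw [hlog]
    exact convexOn_exp.comp_linearMap (LinearMap.mul ℝ ℝ p)
  have hanti : AntitoneOn (fun y => exp (p * y)) (log '' Ioi 0) :=
    fun _ _ _ _ hxy => exp_le_exp.2 (mul_le_mul_of_nonpos_left hxy hp)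
  refine (hexp.comp_concaveOn strictConcaveOn_log_Ioi.concaveOn hanti).congr fun x hx => ?_
  simp only [Function.comp_apply, rpow_def_of_pos (mem_Ioi.1 hx), mul_comm]

theorem concaveOn_rpow_div_two_rpow_sub_one {c : ℝ} (hc0 : c ≠ 0) (hc1 : c < 1) :
    ConcaveOn ℝ (Ioi 0) fun x : ℝ => x ^ c / (2 ^ c - 1) := by
  rcases hc0.lt_or_gt with hc | hc
  · have hD : 2 ^ c - 1 < (0 : ℝ) := sub_neg.2 (rpow_lt_one_of_one_lt_of_neg one_lt_two hc)
    refine ((convexOn_rpow_of_nonpos hc.le).smul (inv_nonneg.2 (neg_nonneg.2 hD.le))).neg.congr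
      fun x _ => ?_
    simp only [Pi.neg_apply, smul_eq_mul, div_eq_inv_mul, inv_neg, neg_mul, neg_neg]
  · have hD : (0 : ℝ) < 2 ^ c - 1 := sub_pos.2 (one_lt_rpow one_lt_two hc)
    refine (((concaveOn_rpow hc.le hc1.le).subset Ioi_subset_Ici_self (convex_Ioi 0)).smul
      (inv_nonneg.2 hD.le)).congr fun x _ => ?_
    simp only [smul_eq_mul, div_eq_inv_mul]

theorem ConcaveOn.sub_le_mul_slope {s : Set ℝ} {f : ℝ → ℝ} (hf : ConcaveOn ℝ s f)
    {a b x y : ℝ} (ha : a ∈ s) (hb : b ∈ s) (hx : x ∈ s) (hy : y ∈ s)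
    (hab : a < b) (hax : a ≤ x) (hby : b ≤ y) (hxy : x ≤ y) :
    f y - f x ≤ (y - x) * slope f a b := by
  rcases hxy.eq_or_lt with rfl | hxy
  · simp
  have h1 : slope f x y ≤ slope f a y := by
    rw [slope_comm f x, slope_comm f a]
    exact hf.antitoneOn_slope_lt hy ⟨ha, by linarith⟩ ⟨hx, hxy⟩ hax
  have h2 : slope f a y ≤ slope f a b :=
    hf.antitoneOn_slope_gt ha ⟨hb, hab⟩ ⟨hy, by linarith⟩ hby
  rw [slope_def_field] at h1
  rw [← div_le_iff₀' (sub_pos.2 hxy)]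
  exact h1.trans h2

theorem sum_mul_pow_le_of_concaveOn {φ : ℝ → ℝ} {θ : ℝ} (hθ : 0 ≤ θ)
    (hφ : ConcaveOn ℝ (Ici 1) φ) (hscale : ∀ y, 1 ≤ y → φ (2 * y) = 2 * θ * φ y)
    (hunit : φ 2 - φ 1 = 1) (d : ℕ) (n : ℕ → ℝ) (hn0 : ∀ s, 0 ≤ n s)
    (hn2 : ∀ s, n s ≤ 2 ^ s) :
    ∑ s ∈ range d, n s * θ ^ s ≤ φ (∑ s ∈ range d, n s + 1) - φ 1 := by
  induction d generalizing n with
  | zero => simp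
  | succ d ih =>
    set a := n 0
    set K := ∑ i ∈ range d, n (i + 1) / 2
    have ha0 : 0 ≤ a := hn0 0
    have ha1 : a ≤ 1 := by simpa using hn2 0
    have hK : 0 ≤ K := sum_nonneg fun i _ => div_nonneg (hn0 _) zero_le_two
    have hIH := ih (fun i => n (i + 1) / 2) (fun i => div_nonneg (hn0 _) zero_le_two)
      fun i => by rw [div_le_iff₀ two_pos, ← pow_succ]; exact hn2 _
    have hsplit : ∑ s ∈ range (d + 1), n s * θ ^ s
        = a + 2 * θ * ∑ i ∈ range d, n (i + 1) / 2 * θ ^ i := by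
      rw [sum_range_succ', mul_sum, pow_zero, mul_one, add_comm]
      congr 1
      exact sum_congr rfl fun i _ => by ring
    have hcount : ∑ s ∈ range (d + 1), n s + 1 = 2 * K + a + 1 := by
      rw [sum_range_succ', mul_sum,
        sum_congr rfl fun i _ => mul_div_cancel₀ (n (i + 1)) two_ne_zero]
    have hstep : φ (2 * K + 2) - φ (2 * K + a + 1) ≤ 1 - a := by
      have hslope := hφ.sub_le_mul_slope (a := 1) (b := 2) (x := 2 * K + a + 1) (y := 2 * K + 2)
        Set.self_mem_Ici (Set.mem_Ici.2 one_le_two) (Set.mem_Ici.2 (by linarith))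
        (Set.mem_Ici.2 (by linarith)) one_lt_two (by linarith) (by linarith) (by linarith)
      rw [slope_def_field, hunit, show (2 : ℝ) - 1 = 1 by norm_num, div_one, mul_one] at hslope
      linarith
    calc ∑ s ∈ range (d + 1), n s * θ ^ s
        = a + 2 * θ * ∑ i ∈ range d, n (i + 1) / 2 * θ ^ i := hsplit
      _ ≤ a + 2 * θ * (φ (K + 1) - φ 1) := by gcongr
      _ = a + φ (2 * K + 2) - φ 2 := by
        rw [mul_sub, ← hscale _ (by linarith), ← hscale 1 le_rfl, mul_add, mul_one]; ring
      _ ≤ φ (∑ s ∈ range (d + 1), n s + 1) - φ 1 := by rw [hcount]; linarith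

theorem stmt5_general (θ : ℝ) (hθ : θ ∈ Set.Ioo (0:ℝ) 1) (hθ2 : θ ≠ 1/2)
    (d : ℕ) (k : ℝ) (n : ℕ → ℝ)
    (hn0 : ∀ s, 0 ≤ n s) (hn2 : ∀ s, n s ≤ 2 ^ s)
    (hsum : ∑ s ∈ Finset.range (d+1), n s = k) :
    ∑ s ∈ Finset.range (d+1), n s * θ ^ s
      ≤ ((2*θ) ^ (Real.logb 2 (k+1)) - 1) / (2*θ - 1) := by
  obtain ⟨hθ0, hθ1⟩ := hθ
  set c := logb 2 (2 * θ)
  have h2c : (2 : ℝ) ^ c = 2 * θ := rpow_logb two_pos (by norm_num) (by linarith)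
  have hD : (2 : ℝ) ^ c - 1 ≠ 0 := by rw [h2c]; exact fun h => hθ2 (by linarith)
  have hc0 : c ≠ 0 := fun h => hD (by rw [h, rpow_zero, sub_self])
  have hc1 : c < 1 := (rpow_lt_rpow_left_iff one_lt_two).1 (by rw [h2c, rpow_one]; linarith)
  have hk : 0 < k + 1 := by linarith [hsum ▸ sum_nonneg fun s _ => hn0 s]
  have hrhs : (2 * θ) ^ logb 2 (k + 1) = (k + 1) ^ c := by
    rw [← h2c, ← rpow_mul zero_le_two, mul_comm, rpow_mul zero_le_two, rpow_logb two_pos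
      (by norm_num) hk]
  have key := sum_mul_pow_le_of_concaveOn (φ := fun x => x ^ c / (2 ^ c - 1)) hθ0.le
    ((concaveOn_rpow_div_two_rpow_sub_one hc0 hc1).subset (Ici_subset_Ioi.2 one_pos)
      (convex_Ici 1))
    (fun y hy => by
      rw [mul_rpow zero_le_two (zero_le_one.trans hy), h2c, mul_div_assoc])
    (by rw [one_rpow, ← sub_div, div_self hD]) (d + 1) n hn0 hn2
  rwa [hsum, one_rpow, ← sub_div, h2c, ← hrhs] at key

theorem stmt5 (θ : ℝ) (hθ : θ ∈ Set.Ioo (0:ℝ) 1) (hθ2 : θ ≠ 1/2)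
    (d : ℕ) (k : ℝ) (hk : 1 ≤ k) (n : ℕ → ℝ)
    (hn0 : ∀ s, 0 ≤ n s) (hn2 : ∀ s, n s ≤ 2 ^ s)
    (hsum : ∑ s ∈ Finset.range (d+1), n s = k) :
    ∑ s ∈ Finset.range (d+1), n s * θ ^ s
      ≤ ((2*θ) ^ (Real.logb 2 (k+1)) - 1) / (2*θ - 1) :=
  stmt5_general θ hθ hθ2 d k n hn0 hn2 hsum
end

section
/- Let ε ∈ (1/6, 1/2]. Define d = (1-2ε)(ab + δ_a δ_b / 4) + ε and δ_d = (1-2ε)(b δ_a + a δ_b). Then for all a, b ∈ (0,1) and δ_a, δ_b ∈ [-1,1] satisfying |δ_a| + |2a-1| ≤ 1 and |δ_b| + |2b-1| ≤ 1, there exists θ ∈ [0,1) (depending only on ε) such that |δ_d|/(1 - |2d-1|) ≤ θ · max(|δ_a|/(1-|2a-1|), |δ_b|/(1-|2b-1|)). -/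
private lemma sQ1 (κ a b p q : ℝ) (hκ0 : 0 ≤ κ) (hκ1 : κ ≤ 2/3)
    (ha0 : 0 < a) (ha1 : a < 1) (hb0 : 0 < b) (hb1 : b < 1)
    (hp0 : 0 < p) (hpa : p ≤ a) (hpa' : p ≤ 1 - a)
    (hq0 : 0 < q) (hqb : q ≤ b) (hqb' : q ≤ 1 - b) :
    (2-κ)*(p*b+a*q) ≤ 1-κ+2*κ*(a*b) := by
  have h2κ : (0:ℝ) ≤ 2 - κ := by linarith
  rcases le_total a (1/2) with ha | ha <;> rcases le_total b (1/2) with hb | hb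
  · have hab : a*b ≤ 1/4 := by nlinarith
    nlinarith [mul_nonneg h2κ (mul_nonneg (sub_nonneg.2 hpa) hb0.le),
      mul_nonneg h2κ (mul_nonneg (sub_nonneg.2 hqb) ha0.le),
      mul_nonneg (by linarith : (0:ℝ) ≤ 1-κ) (by linarith : (0:ℝ) ≤ 1/4 - a*b)]
  · nlinarith [mul_nonneg (mul_nonneg hκ0 ha0.le) (by linarith : (0:ℝ) ≤ 2*b-1),
      mul_nonneg h2κ (mul_nonneg (sub_nonneg.2 hpa) hb0.le),
      mul_nonneg h2κ (mul_nonneg (sub_nonneg.2 hqb') ha0.le),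
      mul_nonneg (by linarith : (0:ℝ) ≤ 1-κ) (by linarith : (0:ℝ) ≤ 1-2*a)]
  · nlinarith [mul_nonneg (mul_nonneg hκ0 hb0.le) (by linarith : (0:ℝ) ≤ 2*a-1),
      mul_nonneg h2κ (mul_nonneg (sub_nonneg.2 hpa') hb0.le),
      mul_nonneg h2κ (mul_nonneg (sub_nonneg.2 hqb) ha0.le),
      mul_nonneg (by linarith : (0:ℝ) ≤ 1-κ) (by linarith : (0:ℝ) ≤ 1-2*b)]
  · nlinarith [mul_nonneg (by linarith : (0:ℝ) ≤ 2*a-1) (by linarith : (0:ℝ) ≤ 4*b-(2-κ)),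
      mul_nonneg h2κ (mul_nonneg (sub_nonneg.2 hpa') hb0.le),
      mul_nonneg h2κ (mul_nonneg (sub_nonneg.2 hqb') ha0.le)]

private lemma sQ2 (κ a b p q : ℝ) (hκ0 : 0 ≤ κ) (hκ1 : κ ≤ 2/3)
    (ha0 : 0 < a) (ha1 : a < 1) (hb0 : 0 < b) (hb1 : b < 1)
    (hp0 : 0 < p) (hpa : p ≤ a) (hpa' : p ≤ 1 - a)
    (hq0 : 0 < q) (hqb : q ≤ b) (hqb' : q ≤ 1 - b) :
    (2-κ)*(p*b+a*q) + 2*κ*(a*b+p*q) ≤ 1+κ := by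
  nlinarith [mul_nonneg (sub_nonneg.2 hpa) (sub_nonneg.2 hqb), mul_nonneg (sub_nonneg.2 hpa') (sub_nonneg.2 hqb'), mul_nonneg (sub_nonneg.2 hpa) (sub_nonneg.2 hqb'), mul_nonneg (sub_nonneg.2 hpa') (sub_nonneg.2 hqb), mul_nonneg hκ0 (mul_nonneg (sub_nonneg.2 hpa) (sub_nonneg.2 hqb)), mul_nonneg hκ0 (mul_nonneg (sub_nonneg.2 hpa') (sub_nonneg.2 hqb')), sq_nonneg (a+b-1), sq_nonneg (a-b), mul_nonneg hκ0 (sq_nonneg (a+b-1)), mul_nonneg (sub_nonneg.2 hκ1) (sq_nonneg (a+b-1)), mul_nonneg hp0.le hq0.le]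

private lemma sQ3 (κ a b p q : ℝ) (hκ0 : 0 ≤ κ) (hκ1 : κ ≤ 2/3)
    (ha0 : 0 < a) (ha1 : a < 1) (hb0 : 0 < b) (hb1 : b < 1)
    (hp0 : 0 < p) (hpa : p ≤ a) (hpa' : p ≤ 1 - a)
    (hq0 : 0 < q) (hqb : q ≤ b) (hqb' : q ≤ 1 - b) :
    (2-κ)*(p*b) + 2*κ*(p*q) ≤ 1-κ+2*κ*(a*b) := by
  nlinarith [mul_nonneg (sub_nonneg.2 hpa) (sub_nonneg.2 hqb), mul_nonneg (sub_nonneg.2 hpa') (sub_nonneg.2 hqb'), mul_nonneg (sub_nonneg.2 hpa) (sub_nonneg.2 hqb'), mul_nonneg (sub_nonneg.2 hpa') (sub_nonneg.2 hqb), mul_nonneg hκ0 (mul_nonneg (sub_nonneg.2 hpa) (sub_nonneg.2 hqb)), mul_nonneg hκ0 (mul_nonneg (sub_nonneg.2 hpa') (sub_nonneg.2 hqb')), sq_nonneg (a+b-1), mul_nonneg hκ0 (sq_nonneg (a+b-1)), mul_nonneg (sub_nonneg.2 hκ1) (sq_nonneg (a+b-1)), mul_nonneg hp0.le hq0.le,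 mul_nonneg hκ0 (mul_nonneg (sub_nonneg.2 hpa) hq0.le), mul_nonneg hκ0 (mul_nonneg (sub_nonneg.2 hpa') hq0.le)]

private lemma sQ4 (κ a b p q : ℝ) (hκ0 : 0 ≤ κ) (hκ1 : κ ≤ 2/3)
    (ha0 : 0 < a) (ha1 : a < 1) (hb0 : 0 < b) (hb1 : b < 1)
    (hp0 : 0 < p) (hpa : p ≤ a) (hpa' : p ≤ 1 - a)
    (hq0 : 0 < q) (hqb : q ≤ b) (hqb' : q ≤ 1 - b) :
    (2-κ)*(a*q) + 2*κ*(p*q) ≤ 1-κ+2*κ*(a*b) := by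
  nlinarith [mul_nonneg (sub_nonneg.2 hpa) (sub_nonneg.2 hqb), mul_nonneg (sub_nonneg.2 hpa') (sub_nonneg.2 hqb'), mul_nonneg (sub_nonneg.2 hpa) (sub_nonneg.2 hqb'), mul_nonneg (sub_nonneg.2 hpa') (sub_nonneg.2 hqb), mul_nonneg hκ0 (mul_nonneg (sub_nonneg.2 hpa) (sub_nonneg.2 hqb)), mul_nonneg hκ0 (mul_nonneg (sub_nonneg.2 hpa') (sub_nonneg.2 hqb')), sq_nonneg (a+b-1), mul_nonneg hκ0 (sq_nonneg (a+b-1)), mul_nonneg (sub_nonneg.2 hκ1) (sq_nonneg (a+b-1)), mul_nonneg hp0.le hq0.le, mul_nonneg hκ0 (mul_nonneg hp0.le (sub_nonneg.2 hqb)), mul_nonneg hκ0 (mul_nonneg hp0.le (sub_nonneg.2 hqb'))]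

private lemma sQ5a (κ a b p q : ℝ) (hκ0 : 0 ≤ κ) (hκ1 : κ ≤ 2/3)
    (ha0 : 0 < a) (ha1 : a < 1) (hb0 : 0 < b) (hb1 : b < 1)
    (hp0 : 0 < p) (hpa : p ≤ a) (hpa' : p ≤ 1 - a)
    (hq0 : 0 < q) (hqb : q ≤ b) (hqb' : q ≤ 1 - b) :
    (2-κ)*(p*b) ≤ 1-κ+2*κ*(1-a*b) := by
  nlinarith [mul_nonneg (sub_nonneg.2 hpa') hb0.le, mul_nonneg hκ0 (mul_nonneg ha0.le hb0.le), mul_nonneg hκ0 (mul_nonneg (sub_nonneg.2 ha1.le) hb0.le), mul_nonneg hp0.le (sub_nonneg.2 hb1.le)]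

private lemma sQ5b (κ a b p q : ℝ) (hκ0 : 0 ≤ κ) (hκ1 : κ ≤ 2/3)
    (ha0 : 0 < a) (ha1 : a < 1) (hb0 : 0 < b) (hb1 : b < 1)
    (hp0 : 0 < p) (hpa : p ≤ a) (hpa' : p ≤ 1 - a)
    (hq0 : 0 < q) (hqb : q ≤ b) (hqb' : q ≤ 1 - b) :
    (2-κ)*(a*q) ≤ 1-κ+2*κ*(1-a*b) := by
  nlinarith [mul_nonneg (sub_nonneg.2 hqb') ha0.le, mul_nonneg hκ0 (mul_nonneg ha0.le hb0.le), mul_nonneg hκ0 (mul_nonneg ha0.le (sub_nonneg.2 hb1.le)), mul_nonneg hq0.le (sub_nonneg.2 ha1.le)]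

set_option maxHeartbeats 2000000 in
private lemma sSide (κ a b p q δa δb : ℝ) (hκ0 : 0 ≤ κ) (hκ1 : κ ≤ 2/3)
    (ha0 : 0 < a) (ha1 : a < 1) (hb0 : 0 < b) (hb1 : b < 1)
    (hp0 : 0 < p) (hpa : p ≤ a) (hpa' : p ≤ 1 - a)
    (hq0 : 0 < q) (hqb : q ≤ b) (hqb' : q ≤ 1 - b)
    (hx : |δa| ≤ 2*p) (hy : |δb| ≤ 2*q) (hdom : p* |δb| ≤ q* |δa|) :
    (2-κ)*p* |b*δa+a*δb| ≤ 2* |δa| *((1-κ)/2 + κ*(a*b+δa*δb/4)) ∧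
    (2-κ)*p* |b*δa+a*δb| ≤ 2* |δa| *((1-κ)/2 + κ*(1-(a*b+δa*δb/4))) := by
  have h2κ : (0:ℝ) ≤ 2 - κ := by linarith
  set x := abs δa with hxdef
  set y := abs δb with hydef
  have hx0 : 0 ≤ x := abs_nonneg _
  have hy0 : 0 ≤ y := abs_nonneg _
  have hxy4pq : x*y ≤ 4*(p*q) := by
    have := mul_le_mul hx hy hy0 (by linarith)
    nlinarith
  have hQ1 := sQ1 κ a b p q hκ0 hκ1 ha0 ha1 hb0 hb1 hp0 hpa hpa' hq0 hqb hqb'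
  have hQ2 := sQ2 κ a b p q hκ0 hκ1 ha0 ha1 hb0 hb1 hp0 hpa hpa' hq0 hqb hqb'
  have hQ3 := sQ3 κ a b p q hκ0 hκ1 ha0 ha1 hb0 hb1 hp0 hpa hpa' hq0 hqb hqb'
  have hQ4 := sQ4 κ a b p q hκ0 hκ1 ha0 ha1 hb0 hb1 hp0 hpa hpa' hq0 hqb hqb'
  have hQ5a := sQ5a κ a b p q hκ0 hκ1 ha0 ha1 hb0 hb1 hp0 hpa hpa' hq0 hqb hqb'
  have hQ5b := sQ5b κ a b p q hκ0 hκ1 ha0 ha1 hb0 hb1 hp0 hpa hpa' hq0 hqb hqb'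
  have habs : |b*δa| = b*x := by rw [abs_mul, abs_of_pos hb0]
  have habs' : |a*δb| = a*y := by rw [abs_mul, abs_of_pos ha0]
  rcases le_or_gt 0 (δa*δb) with hs | hs
  · -- same sign
    have hprod : δa*δb = x*y := by rw [hxdef, hydef, ← abs_mul, abs_of_nonneg hs]
    have hN : |b*δa+a*δb| ≤ b*x + a*y := by
      calc |b*δa+a*δb| ≤ |b*δa| + |a*δb| := abs_add_le _ _
        _ = b*x + a*y := by rw [habs, habs']
    constructor
    · rw [hprod]
      nlinarith [mul_nonneg (mul_nonneg h2κ hp0.le) (sub_nonneg.2 hN),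
        mul_nonneg (mul_nonneg h2κ ha0.le) (sub_nonneg.2 hdom),
        mul_nonneg hx0 (sub_nonneg.2 hQ1),
        mul_nonneg hκ0 (mul_nonneg (mul_nonneg hx0 hx0) hy0)]
    · rw [hprod]
      nlinarith [mul_nonneg (mul_nonneg h2κ hp0.le) (sub_nonneg.2 hN),
        mul_nonneg (mul_nonneg h2κ ha0.le) (sub_nonneg.2 hdom),
        mul_nonneg hx0 (sub_nonneg.2 hQ2),
        mul_nonneg (mul_nonneg hκ0 hx0) (sub_nonneg.2 hxy4pq)]
  · -- opposite signs
    have hprod : δa*δb = -(x*y) := by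
      rw [hxdef, hydef, ← abs_mul]
      rw [abs_of_nonpos hs.le]; ring
    have hN : |b*δa+a*δb| ≤ max (b*x) (a*y) := by
      rcases le_total 0 δa with h1 | h1
      · have h2 : δb ≤ 0 := by
          by_contra hc; push_neg at hc
          nlinarith [mul_nonneg h1 hc.le]
        have e1 : x = δa := abs_of_nonneg h1
        have e2 : y = -δb := abs_of_nonpos h2
        rw [e1, e2]
        rcases le_total (b*δa + a*δb) 0 with h3 | h3
        · rw [abs_of_nonpos h3]
          exact le_trans (by nlinarith [mul_nonneg hb0.le h1]) (le_max_right (b*δa) (a*(-δb)))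
        · rw [abs_of_nonneg h3]
          exact le_trans (by nlinarith [mul_nonneg ha0.le (neg_nonneg.2 h2)]) (le_max_left (b*δa) (a*(-δb)))
      · have h2 : 0 ≤ δb := by
          by_contra hc; push_neg at hc
          nlinarith [mul_nonneg (neg_nonneg.2 h1) (neg_nonneg.2 hc.le)]
        have e1 : x = -δa := abs_of_nonpos h1
        have e2 : y = δb := abs_of_nonneg h2
        rw [e1, e2]
        rcases le_total (b*δa + a*δb) 0 with h3 | h3
        · rw [abs_of_nonpos h3]
          exact le_trans (by nlinarith [mul_nonneg ha0.le h2]) (le_max_left (b*(-δa)) (a*δb))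
        · rw [abs_of_nonneg h3]
          exact le_trans (by nlinarith [mul_nonneg hb0.le (neg_nonneg.2 h1)]) (le_max_right (b*(-δa)) (a*δb))
    rcases max_cases (b*x) (a*y) with ⟨hm, hm'⟩ | ⟨hm, hm'⟩ <;> rw [hm] at hN
    · constructor
      · rw [hprod]
        nlinarith [mul_nonneg (mul_nonneg h2κ hp0.le) (sub_nonneg.2 hN),
          mul_nonneg hx0 (sub_nonneg.2 hQ3),
          mul_nonneg (mul_nonneg hκ0 hx0) (sub_nonneg.2 hxy4pq)]
      · rw [hprod]
        nlinarith [mul_nonneg (mul_nonneg h2κ hp0.le) (sub_nonneg.2 hN),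
          mul_nonneg hx0 (sub_nonneg.2 hQ5a),
          mul_nonneg hκ0 (mul_nonneg (mul_nonneg hx0 hx0) hy0)]
    · constructor
      · rw [hprod]
        nlinarith [mul_nonneg (mul_nonneg h2κ hp0.le) (sub_nonneg.2 hN),
          mul_nonneg (mul_nonneg h2κ ha0.le) (sub_nonneg.2 hdom),
          mul_nonneg hx0 (sub_nonneg.2 hQ4),
          mul_nonneg (mul_nonneg hκ0 hx0) (sub_nonneg.2 hxy4pq)]
      · rw [hprod]
        nlinarith [mul_nonneg (mul_nonneg h2κ hp0.le) (sub_nonneg.2 hN),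
          mul_nonneg (mul_nonneg h2κ ha0.le) (sub_nonneg.2 hdom),
          mul_nonneg hx0 (sub_nonneg.2 hQ5b),
          mul_nonneg hκ0 (mul_nonneg (mul_nonneg hx0 hx0) hy0)]

set_option maxHeartbeats 2000000 in
private lemma sAux (ε a b δa δb : ℝ) (hε1 : 1/6 < ε) (hε2 : ε ≤ 1/2)
    (ha0 : 0 < a) (ha1 : a < 1) (hb0 : 0 < b) (hb1 : b < 1)
    (hca : |δa| + |2*a - 1| ≤ 1) (hcb : |δb| + |2*b - 1| ≤ 1)
    (hdom : min a (1-a) * |δb| ≤ min b (1-b) * |δa|) :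
    |(1 - 2*ε) * (b*δa + a*δb)| / (1 - |2 * ((1 - 2*ε) * (a*b + δa*δb/4) + ε) - 1|)
      ≤ (2*(1 - 2*ε)/(1 + 2*ε)) * (|δa| / (1 - |2*a - 1|)) := by
  have hκ0 : (0:ℝ) ≤ 1 - 2*ε := by linarith
  have hκ1 : (1:ℝ) - 2*ε ≤ 2/3 := by linarith
  set p := min a (1-a) with hpdef
  set q := min b (1-b) with hqdef
  have hp0 : 0 < p := lt_min ha0 (by linarith)
  have hq0 : 0 < q := lt_min hb0 (by linarith)
  have hpa : p ≤ a := min_le_left _ _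
  have hpa' : p ≤ 1 - a := min_le_right _ _
  have hqb : q ≤ b := min_le_left _ _
  have hqb' : q ≤ 1 - b := min_le_right _ _
  have h2a : 1 - |2*a - 1| = 2*p := by
    rcases le_total a (1/2) with h | h
    · rw [hpdef, abs_of_nonpos (by linarith), min_eq_left (by linarith)]; ring
    · rw [hpdef, abs_of_nonneg (by linarith), min_eq_right (by linarith)]; ring
  have h2b : 1 - |2*b - 1| = 2*q := by
    rcases le_total b (1/2) with h | h
    · rw [hqdef, abs_of_nonpos (by linarith), min_eq_left (by linarith)]; ring
    · rw [hqdef, abs_of_nonneg (by linarith), min_eq_right (by linarith)]; ring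
  have hx : |δa| ≤ 2*p := by
    have := abs_nonneg (2*a - 1); linarith [hca, h2a.symm.le]
  have hy : |δb| ≤ 2*q := by
    have := abs_nonneg (2*b - 1); linarith [hcb, h2b.symm.le]
  obtain ⟨H1, H2⟩ := sSide (1-2*ε) a b p q δa δb hκ0 hκ1 ha0 ha1 hb0 hb1
    hp0 hpa hpa' hq0 hqb hqb' hx hy hdom
  have he_lo : ε ≤ (1 - 2*ε) * (a*b + δa*δb/4) + ε := by
    nlinarith [mul_nonneg hκ0 (by nlinarith [mul_le_mul hx hy (abs_nonneg _) (by linarith : (0:ℝ) ≤ 2*p), neg_abs_le (δa*δb), abs_mul δa δb, mul_le_mul hpa hqb hq0.le ha0.le] : (0:ℝ) ≤ a*b + δa*δb/4)]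
  have he_hi : (1 - 2*ε) * (a*b + δa*δb/4) + ε ≤ 1 - ε := by
    nlinarith [mul_nonneg hκ0 (by nlinarith [mul_le_mul hx hy (abs_nonneg _) (by linarith : (0:ℝ) ≤ 2*p), le_abs_self (δa*δb), abs_mul δa δb, mul_le_mul hpa' hqb' hq0.le (by linarith : (0:ℝ) ≤ 1-a)] : (0:ℝ) ≤ 1 - (a*b + δa*δb/4))]
  have hDpos : 0 < 1 - |2 * ((1 - 2*ε) * (a*b + δa*δb/4) + ε) - 1| := by
    have : |2 * ((1 - 2*ε) * (a*b + δa*δb/4) + ε) - 1| < 1 :=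
      abs_lt.2 ⟨by nlinarith, by nlinarith⟩
    linarith
  have hkey : (1 + 2*ε) * p * |b*δa + a*δb|
      ≤ |δa| * (1 - |2 * ((1 - 2*ε) * (a*b + δa*δb/4) + ε) - 1|) := by
    rcases le_total ((1 - 2*ε) * (a*b + δa*δb/4) + ε) (1/2) with h | h
    · rw [abs_of_nonpos (show 2 * ((1 - 2*ε) * (a*b + δa*δb/4) + ε) - 1 ≤ 0 by nlinarith)]
      nlinarith [H1]
    · rw [abs_of_nonneg (show 0 ≤ 2 * ((1 - 2*ε) * (a*b + δa*δb/4) + ε) - 1 by nlinarith)]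
      nlinarith [H2]
  rw [h2a, abs_mul, abs_of_nonneg hκ0, div_mul_div_comm, div_le_div_iff₀ hDpos (by positivity)]
  nlinarith [mul_le_mul_of_nonneg_left hkey (by linarith : (0:ℝ) ≤ 2*(1 - 2*ε)),
    mul_nonneg (abs_nonneg (b*δa+a*δb)) hDpos.le]

theorem stmt7 (ε : ℝ) (hε : ε ∈ Set.Ioc (1/6 : ℝ) (1/2)) :
    ∃ θ ∈ Set.Ico (0:ℝ) 1, ∀ a b δa δb : ℝ,
      a ∈ Set.Ioo (0:ℝ) 1 → b ∈ Set.Ioo (0:ℝ) 1 →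
      δa ∈ Set.Icc (-1:ℝ) 1 → δb ∈ Set.Icc (-1:ℝ) 1 →
      |δa| + |2*a - 1| ≤ 1 → |δb| + |2*b - 1| ≤ 1 →
      |(1 - 2*ε) * (b*δa + a*δb)|
          / (1 - |2 * ((1 - 2*ε) * (a*b + δa*δb/4) + ε) - 1|)
        ≤ θ * max (|δa| / (1 - |2*a - 1|)) (|δb| / (1 - |2*b - 1|)) := by
  obtain ⟨hε1, hε2⟩ := hε
  have hθ0 : (0:ℝ) ≤ 2*(1 - 2*ε)/(1 + 2*ε) := by
    apply div_nonneg <;> linarith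
  refine ⟨2*(1 - 2*ε)/(1 + 2*ε), ⟨hθ0, ?_⟩, ?_⟩
  · rw [div_lt_one (by linarith)]; linarith
  · rintro a b δa δb ⟨ha0, ha1⟩ ⟨hb0, hb1⟩ _ _ hca hcb
    rcases le_total (min a (1-a) * |δb|) (min b (1-b) * |δa|) with h | h
    · refine le_trans (sAux ε a b δa δb hε1 hε2 ha0 ha1 hb0 hb1 hca hcb h) ?_
      exact mul_le_mul_of_nonneg_left (le_max_left _ _) hθ0
    · have H := sAux ε b a δb δa hε1 hε2 hb0 hb1 ha0 ha1 hcb hca h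
      rw [show b*δa + a*δb = a*δb + b*δa from by ring,
        show a*b + δa*δb/4 = b*a + δb*δa/4 from by ring]
      exact le_trans H (mul_le_mul_of_nonneg_left (le_max_right _ _) hθ0)
end

section
/- Let τ ∈ (0, 1/2]. Define e = (1-2τ)(−2ab − δ_a δ_b/2 + a + b) + τ and δ_e = (1-2τ)((1-2a)δ_b + (1-2b)δ_a). Then for all a, b ∈ (0,1) and δ_a, δ_b ∈ [-1,1] with |δ_a| + |2a-1| ≤ 1 and |δ_b| + |2b-1| ≤ 1, it holds that |δ_e|/(1-|2e-1|) ≤ max(|δ_a|/(1-|2a-1|), |δ_b|/(1-|2b-1|)). -/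
theorem stmt8 (τ : ℝ) (hτ : τ ∈ Set.Ioc (0:ℝ) (1/2)) (a b δa δb : ℝ)
    (ha : a ∈ Set.Ioo (0:ℝ) 1) (hb : b ∈ Set.Ioo (0:ℝ) 1)
    (hδa : δa ∈ Set.Icc (-1:ℝ) 1) (hδb : δb ∈ Set.Icc (-1:ℝ) 1)
    (h1 : |δa| + |2*a - 1| ≤ 1) (h2 : |δb| + |2*b - 1| ≤ 1) :
    |(1 - 2*τ) * ((1 - 2*a)*δb + (1 - 2*b)*δa)|
        / (1 - |2 * ((1 - 2*τ) * (-2*a*b - δa*δb/2 + a + b) + τ) - 1|)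
      ≤ max (|δa| / (1 - |2*a - 1|)) (|δb| / (1 - |2*b - 1|)) := by
  obtain ⟨hτ0, hτ1⟩ := hτ
  obtain ⟨ha0, ha1⟩ := ha
  obtain ⟨hb0, hb1⟩ := hb
  have ht0 : (0:ℝ) ≤ 1 - 2*τ := by linarith
  have ht1 : 1 - 2*τ < 1 := by linarith
  have hp0 : (0:ℝ) ≤ |2*a-1| := abs_nonneg _
  have hq0 : (0:ℝ) ≤ |2*b-1| := abs_nonneg _
  have hu0 : (0:ℝ) ≤ |δa| := abs_nonneg _
  have hv0 : (0:ℝ) ≤ |δb| := abs_nonneg _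
  have hp1 : |2*a-1| < 1 := abs_lt.mpr ⟨by linarith, by linarith⟩
  have hq1 : |2*b-1| < 1 := abs_lt.mpr ⟨by linarith, by linarith⟩
  have hu1 : |δa| ≤ 1 - |2*a-1| := by linarith
  have hv1 : |δb| ≤ 1 - |2*b-1| := by linarith
  set M := max (|δa| / (1 - |2*a - 1|)) (|δb| / (1 - |2*b - 1|)) with hMdef
  have hM0 : 0 ≤ M :=
    le_trans (div_nonneg hu0 (by linarith)) (le_max_left _ _)
  have hMu : |δa| ≤ M * (1 - |2*a-1|) :=
    (div_le_iff₀ (by linarith : (0:ℝ) < 1 - |2*a-1|)).mp (le_max_left _ _)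
  have hMv : |δb| ≤ M * (1 - |2*b-1|) :=
    (div_le_iff₀ (by linarith : (0:ℝ) < 1 - |2*b-1|)).mp (le_max_right _ _)
  -- numerator bound
  have hnum : |(1 - 2*τ) * ((1 - 2*a)*δb + (1 - 2*b)*δa)|
      ≤ (1 - 2*τ) * (|2*a-1| * |δb| + |2*b-1| * |δa|) := by
    rw [abs_mul, abs_of_nonneg ht0]
    refine mul_le_mul_of_nonneg_left ?_ ht0
    calc |(1 - 2*a)*δb + (1 - 2*b)*δa| ≤ |(1 - 2*a)*δb| + |(1 - 2*b)*δa| := abs_add_le _ _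
      _ = |2*a-1| * |δb| + |2*b-1| * |δa| := by
          rw [abs_mul, abs_mul, abs_sub_comm 1 (2*a), abs_sub_comm 1 (2*b)]
  -- denominator rewrite
  have hden : 2 * ((1 - 2*τ) * (-2*a*b - δa*δb/2 + a + b) + τ) - 1
      = -((1 - 2*τ) * ((2*a-1)*(2*b-1) + δa*δb)) := by ring
  have hw : |(2*a-1)*(2*b-1) + δa*δb| ≤ |2*a-1| * |2*b-1| + |δa| * |δb| := by
    calc |(2*a-1)*(2*b-1) + δa*δb| ≤ |(2*a-1)*(2*b-1)| + |δa*δb| := abs_add_le _ _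
      _ = |2*a-1| * |2*b-1| + |δa| * |δb| := by rw [abs_mul, abs_mul]
  have hE : |2 * ((1 - 2*τ) * (-2*a*b - δa*δb/2 + a + b) + τ) - 1|
      ≤ (1 - 2*τ) * (|2*a-1| * |2*b-1| + |δa| * |δb|) := by
    rw [hden, abs_neg, abs_mul, abs_of_nonneg ht0]
    exact mul_le_mul_of_nonneg_left hw ht0
  have huv : |δa| * |δb| ≤ (1 - |2*a-1|) * (1 - |2*b-1|) :=
    mul_le_mul hu1 hv1 hv0 (by linarith)
  have hpquv : |2*a-1| * |2*b-1| + |δa| * |δb| ≤ 1 := by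
    nlinarith [mul_nonneg hp0 (sub_nonneg.mpr hq1.le),
      mul_nonneg hq0 (sub_nonneg.mpr hp1.le)]
  have hD : 0 < 1 - |2 * ((1 - 2*τ) * (-2*a*b - δa*δb/2 + a + b) + τ) - 1| := by
    have : (1 - 2*τ) * (|2*a-1| * |2*b-1| + |δa| * |δb|) ≤ (1 - 2*τ) * 1 :=
      mul_le_mul_of_nonneg_left hpquv ht0
    nlinarith
  rw [div_le_iff₀ hD]
  -- core inequality
  have hcore : |2*a-1| * |δb| + |2*b-1| * |δa|
      + M * (|2*a-1| * |2*b-1| + |δa| * |δb|) ≤ M := by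
    nlinarith [mul_le_mul_of_nonneg_left hMv hp0,
      mul_le_mul_of_nonneg_left hMu hq0,
      mul_le_mul_of_nonneg_left huv hM0]
  -- combine
  have h3 : M * |2 * ((1 - 2*τ) * (-2*a*b - δa*δb/2 + a + b) + τ) - 1|
      ≤ M * ((1 - 2*τ) * (|2*a-1| * |2*b-1| + |δa| * |δb|)) :=
    mul_le_mul_of_nonneg_left hE hM0
  have htM : (1 - 2*τ) * M ≤ M := by have h5 := mul_nonneg hτ0.le hM0; linarith
  have h4 := mul_le_mul_of_nonneg_left hcore ht0
  linarith [hnum, h3, h4, htM]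
end

section
/- Suppose x_a, x_b, δ_a, δ_b ∈ [0,1] satisfy δ_b/(1-x_b) ≤ δ_a/(1-x_a) ≤ 1 (with x_a, x_b < 1). Then (x_a δ_b + x_b δ_a)·(1-x_a)/δ_a + δ_a δ_b + x_a x_b ≤ 1, provided δ_a > 0. -/
theorem stmt9 (xa xb δa δb : ℝ)
    (hxa : xa ∈ Set.Icc (0:ℝ) 1) (hxb : xb ∈ Set.Icc (0:ℝ) 1)
    (hδa : δa ∈ Set.Icc (0:ℝ) 1) (hδb : δb ∈ Set.Icc (0:ℝ) 1)
    (hxa1 : xa < 1) (hxb1 : xb < 1) (hδapos : 0 < δa)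
    (h1 : δb / (1 - xb) ≤ δa / (1 - xa)) (h2 : δa / (1 - xa) ≤ 1) :
    (xa*δb + xb*δa) * (1 - xa) / δa + δa*δb + xa*xb ≤ 1 := by
  obtain ⟨hxa0, hxa1'⟩ := hxa
  obtain ⟨hxb0, _⟩ := hxb
  obtain ⟨hδb0, _⟩ := hδb
  have h1a : (0:ℝ) < 1 - xa := by linarith
  have h1b : (0:ℝ) < 1 - xb := by linarith
  have key1 : δb * (1 - xa) ≤ δa * (1 - xb) := by
    rw [div_le_div_iff₀ h1b h1a] at h1; linarith
  have key2 : δa ≤ 1 - xa := by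
    rw [div_le_one h1a] at h2; exact h2
  rw [div_add' _ _ _ (ne_of_gt hδapos), div_add' _ _ _ (ne_of_gt hδapos), div_le_one hδapos]
  nlinarith [mul_nonneg hxa0 hxb0, mul_nonneg hxb0 hδapos.le,
    mul_le_mul_of_nonneg_left key1 hxa0,
    mul_le_mul_of_nonneg_left key1 hδapos.le,
    mul_le_mul key2 key2 hδapos.le h1a.le,
    mul_le_mul_of_nonneg_right (mul_le_mul key2 key2 hδapos.le h1a.le) h1b.le,
    mul_nonneg hδb0 h1a.le, mul_pos h1a h1b]
end

section
/- Suppose c is a stochastic map with amplification function A_c satisfying A_c(p₀) = p₀ and A_c'(p₀) > 1 for some p₀ ∈ (0,1). Then there exists a stochastic map f, built from c using composition with the maps m_r (mix with constant 1), duals (defined by A_{dual(c)}(p) = 1 - A_c(1-p)), and convex combinations, such that A_f(1/2) = 1/2 and A_f'(1/2) > 1. -/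
/-- The class of functions generated from `A` by the affine maps `p ↦ r·p + 1 - r`,
duality `f ↦ 1 - f(1 - ·)`, composition, and convex combination. -/
inductive Gen (A : ℝ → ℝ) : (ℝ → ℝ) → Prop
  | base : Gen A A
  | affine (r : ℝ) : r ∈ Set.Icc (0:ℝ) 1 → Gen A (fun p => r * p + 1 - r)
  | dual (f : ℝ → ℝ) : Gen A f → Gen A (fun p => 1 - f (1 - p))
  | comp (f g : ℝ → ℝ) : Gen A f → Gen A g → Gen A (f ∘ g)
  | mix (f g : ℝ → ℝ) (t : ℝ) : t ∈ Set.Icc (0:ℝ) 1 → Gen A f → Gen A g →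
      Gen A (fun p => t * f p + (1 - t) * g p)

/-!
Conjugating by affine maps of positive slope, which the generated class contains in enough
supply to move any point of `(0, 1)` to any other, transports the fixed point `p₀` of `A` to
`1/2` at the cost of a fixed positive factor `κ` in the derivative. Since `(A^[n])'(p₀)` is the
`n`-th power of `A'(p₀) > 1`, a large enough iterate beats `κ⁻¹`.
-/

open Set

namespace Gen

variable {A : ℝ → ℝ}

theorem id : Gen A _root_.id := by
  convert Gen.affine (A := A) 1 (by simp) using 1
  funext p
  simp

theorem const_mul {r : ℝ} (hr : r ∈ Icc (0:ℝ) 1) : Gen A (fun p => r * p) := by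
  convert Gen.dual _ (Gen.affine (A := A) r hr) using 2 with p
  ring

theorem iterate (n : ℕ) : Gen A A^[n] := by
  induction n with
  | zero => exact Gen.id
  | succ n ih => rw [Function.iterate_succ']; exact Gen.comp _ _ Gen.base ih

theorem exists_affine_apply_eq {x y : ℝ} (hx : x ∈ Ioo (0:ℝ) 1) (hy : y ∈ Ioo (0:ℝ) 1) :
    ∃ s c : ℝ, 0 < s ∧ Gen A (fun p => s * p + c) ∧ s * x + c = y := by
  obtain ⟨hx0, hx1⟩ := hx
  obtain ⟨hy0, hy1⟩ := hy
  rcases le_or_gt y x with hyx | hxy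
  · refine ⟨y / x, 0, by positivity, ?_, by field_simp; ring⟩
    simpa using const_mul (A := A) ⟨by positivity, (div_le_one hx0).mpr hyx⟩
  · refine ⟨(1 - y) / (1 - x), 1 - (1 - y) / (1 - x), div_pos (by linarith) (by linarith),
      ?_, ?_⟩
    · convert Gen.affine (A := A) ((1 - y) / (1 - x))
        ⟨div_nonneg (by linarith) (by linarith), (div_le_one (by linarith)).mpr (by linarith)⟩
        using 2 with p
      ring
    · field_simp [show (1 - x) ≠ 0 by linarith]
      ring

theorem exists_conj_hasDerivAt {q x : ℝ} (hq : q ∈ Ioo (0:ℝ) 1) (hx : x ∈ Ioo (0:ℝ) 1) :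
    ∃ κ > 0, ∀ g : ℝ → ℝ, ∀ g' : ℝ, Gen A g → g q = q → HasDerivAt g g' q →
      ∃ B : ℝ → ℝ, Gen A B ∧ B x = x ∧ HasDerivAt B (κ * g') x := by
  obtain ⟨s, c, hs, hin, hin_x⟩ := exists_affine_apply_eq (A := A) hx hq
  obtain ⟨t, d, ht, hout, hout_q⟩ := exists_affine_apply_eq (A := A) hq hx
  refine ⟨t * s, mul_pos ht hs, fun g g' hg hfix hg' => ?_⟩
  refine ⟨(fun p => t * p + d) ∘ g ∘ (fun p => s * p + c),
    Gen.comp _ _ hout (Gen.comp _ _ hg hin), by simp [hin_x, hfix, hout_q], ?_⟩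
  have hin' : HasDerivAt (fun p => s * p + c) s x := by
    simpa using ((hasDerivAt_id x).const_mul s).add_const c
  rw [← hin_x] at hg'
  exact (((hg'.comp x hin').const_mul t).add_const d).congr_deriv (by ring)

end Gen

theorem stmt13_general (A : ℝ → ℝ)
    (p₀ : ℝ) (hp₀ : p₀ ∈ Set.Ioo (0:ℝ) 1) (hfix : A p₀ = p₀)
    (hderiv : 1 < deriv A p₀) :
    ∃ B : ℝ → ℝ, Gen A B ∧ B (1/2) = 1/2 ∧ 1 < deriv B (1/2) := by
  have hA : HasDerivAt A (deriv A p₀) p₀ :=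
    (differentiableAt_of_deriv_ne_zero (by linarith)).hasDerivAt
  obtain ⟨κ, hκ, hconj⟩ := Gen.exists_conj_hasDerivAt (A := A) (x := 1/2) hp₀ (by norm_num)
  obtain ⟨n, hn⟩ := pow_unbounded_of_one_lt κ⁻¹ hderiv
  obtain ⟨B, hB, hB_half, hB'⟩ :=
    hconj _ _ (Gen.iterate n) (Function.iterate_fixed hfix n) (HasDerivAt.iterate _ hA hfix n)
  exact ⟨B, hB, hB_half, hB'.deriv ▸ (inv_lt_iff_one_lt_mul₀' hκ).mp hn⟩

theorem stmt13 (P : Polynomial ℝ) (A : ℝ → ℝ) (hA : A = fun p => P.eval p)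
    (hmaps : Set.MapsTo A (Set.Icc 0 1) (Set.Icc 0 1))
    (p₀ : ℝ) (hp₀ : p₀ ∈ Set.Ioo (0:ℝ) 1) (hfix : A p₀ = p₀)
    (hderiv : 1 < deriv A p₀) :
    ∃ B : ℝ → ℝ, Gen A B ∧ B (1/2) = 1/2 ∧ 1 < deriv B (1/2) :=
  stmt13_general A p₀ hp₀ hfix hderiv
end

section
/- Define the two-input stochastic map D_{r,s} which outputs 0 with probability r, 1 with probability s, the first input with probability (1-r-s)/2 and the second input with probability (1-r-s)/2. If the inputs are independent Bernoulli with parameters 1/2 + κ₁ and 1/2 + κ₂, the output is Bernoulli with parameter q = (1 + κ₁ + κ₂)/2 · (1-r-s) + s. Moreover, for every β ∈ (0, 1/2], with r = 1/4 there exists s ∈ [0, 3/4] such that: (i) whenever κ₁, κ₂ ∈ [β/2, β], q > 1/2; and (ii) whenever κ₁, κ₂ ∈ [-β, β] with min(κ₁,κ₂) ≤ -β/2, q < 1/2. -/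
theorem stmt16 :
    (∀ r s κ₁ κ₂ : ℝ,
      s + (1 - r - s)/2 * (1/2 + κ₁) + (1 - r - s)/2 * (1/2 + κ₂)
        = (1 + κ₁ + κ₂)/2 * (1 - r - s) + s) ∧
    ∀ β : ℝ, β ∈ Set.Ioc (0:ℝ) (1/2) → ∃ s ∈ Set.Icc (0:ℝ) (3/4),
      (∀ κ₁ κ₂ : ℝ, κ₁ ∈ Set.Icc (β/2) β → κ₂ ∈ Set.Icc (β/2) β →
        1/2 < (1 + κ₁ + κ₂)/2 * (1 - 1/4 - s) + s) ∧
      (∀ κ₁ κ₂ : ℝ, κ₁ ∈ Set.Icc (-β) β → κ₂ ∈ Set.Icc (-β) β →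
        min κ₁ κ₂ ≤ -β/2 →
        (1 + κ₁ + κ₂)/2 * (1 - 1/4 - s) + s < 1/2) := by
  constructor
  · intro r s κ₁ κ₂; ring
  · rintro β ⟨hβ0, hβ1⟩
    by_cases hb : β ≤ 4/9
    · set s : ℝ := (4 - 9*β)/(16 - 12*β) with hs_def
      have hd : (0:ℝ) < 16 - 12*β := by linarith
      have hs : s * (16 - 12*β) = 4 - 9*β := div_mul_cancel₀ _ (ne_of_gt hd)
      have hs0 : 0 ≤ s := div_nonneg (by linarith) hd.le
      have hs3 : 0 < 3 - 4*s := by nlinarith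
      refine ⟨s, ⟨hs0, by nlinarith⟩, ?_, ?_⟩
      · rintro κ₁ κ₂ ⟨h1, h1'⟩ ⟨h2, h2'⟩
        have hm : 0 ≤ (κ₁ + κ₂ - β) * (3 - 4*s) :=
          mul_nonneg (by linarith) hs3.le
        nlinarith [mul_pos hβ0 hs3]
      · rintro κ₁ κ₂ ⟨h1, h1'⟩ ⟨h2, h2'⟩ hmin
        have hsum : κ₁ + κ₂ ≤ β/2 := by
          rcases min_le_iff.mp hmin with h | h <;> linarith
        have hm : 0 ≤ (β/2 - (κ₁ + κ₂)) * (3 - 4*s) :=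
          mul_nonneg (by linarith) hs3.le
        nlinarith [mul_pos hβ0 hs3]
    · push_neg at hb
      refine ⟨0, ⟨le_refl 0, by norm_num⟩, ?_, ?_⟩
      · rintro κ₁ κ₂ ⟨h1, h1'⟩ ⟨h2, h2'⟩
        nlinarith
      · rintro κ₁ κ₂ ⟨h1, h1'⟩ ⟨h2, h2'⟩ hmin
        have hsum : κ₁ + κ₂ ≤ β/2 := by
          rcases min_le_iff.mp hmin with h | h <;> linarith
        nlinarith
end
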